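/- arXiv:1801.08249 — 3 statements merged into one kernel-verified Lean document; each statement's English description precedes it below -/
import Mathlib

section
/- Let T be a tournament with minimum out-degree at least k, and let T' be a vertex-minimal subtournament of T with minimum out-degree at least k. Then every vertex of T' whose out-degree in T' is strictly greater than k has an in-neighbour in T' whose out-degree in T' is exactly k. -/
/-!
Delete a vertex `v` of out-degree `> k` from `S`. The remainder is nonempty (it contains an
out-neighbour of `v`), so by minimality some `u` has out-degree `< k` in it. Deleting `v` lowers
only the out-degrees of in-neighbours of `v`, and each by one; since `u` had out-degree `≥ k`
in `S`, it is an in-neighbour of `v` of out-degree exactly `k`.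
-/

/-- A tournament: an irreflexive relation where every pair of distinct
vertices is joined by exactly one directed edge. -/
def IsTournament {V : Type} (r : V → V → Prop) : Prop :=
  (∀ x, ¬ r x x) ∧ ∀ x y : V, x ≠ y → (r x y ↔ ¬ r y x)

/-- Out-degree of `x` in the whole tournament. -/
def outDeg {V : Type} [Fintype V] (r : V → V → Prop) [DecidableRel r] (x : V) : ℕ :=
  (Finset.univ.filter fun y => r x y).card

/-- Out-degree of `x` inside the subtournament induced on `S`. -/
def outDegOn {V : Type} [DecidableEq V] (r : V → V → Prop) [DecidableRel r]
    (S : Finset V) (x : V) : ℕ :=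
  (S.filter fun y => r x y).card

theorem outDegOn_erase_add_ite {V : Type} [DecidableEq V] (r : V → V → Prop) [DecidableRel r]
    {S : Finset V} {v : V} (hv : v ∈ S) (u : V) :
    outDegOn r (S.erase v) u + (if r u v then 1 else 0) = outDegOn r S u := by
  unfold outDegOn
  rw [Finset.filter_erase]
  split_ifs with huv
  · exact Finset.card_erase_add_one (Finset.mem_filter.2 ⟨hv, huv⟩)
  · rw [Finset.erase_eq_of_notMem (fun h => huv (Finset.mem_filter.1 h).2), add_zero]

theorem erase_nonempty_of_outDegOn_pos {V : Type} [DecidableEq V] {r : V → V → Prop}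
    [DecidableRel r] (hirr : ∀ x, ¬ r x x) {S : Finset V} {v : V} (hpos : 0 < outDegOn r S v) :
    (S.erase v).Nonempty := by
  obtain ⟨w, hw⟩ := Finset.card_pos.1 hpos
  obtain ⟨hwS, hvw⟩ := Finset.mem_filter.1 hw
  exact ⟨w, Finset.mem_erase.2 ⟨fun h => hirr v (h ▸ hvw), hwS⟩⟩

theorem in_neighbour_of_outdeg_k_general {V : Type} [DecidableEq V]
    (r : V → V → Prop) [DecidableRel r] (hT : IsTournament r)
    (k : ℕ)
    (S : Finset V)
    (hSdeg : ∀ v ∈ S, k ≤ outDegOn r S v)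
    (hSmin : ∀ S' : Finset V, S' ⊂ S → S'.Nonempty → ∃ v ∈ S', outDegOn r S' v < k) :
    ∀ v ∈ S, k < outDegOn r S v → ∃ u ∈ S, r u v ∧ outDegOn r S u = k := by
  intro v hv hvk
  obtain ⟨u, huS', hu⟩ := hSmin (S.erase v) (Finset.erase_ssubset hv)
    (erase_nonempty_of_outDegOn_pos hT.1 (Nat.zero_lt_of_lt hvk))
  have huS : u ∈ S := Finset.mem_of_mem_erase huS'
  have hsplit := outDegOn_erase_add_ite r hv u
  have hku := hSdeg u huS
  by_cases huv : r u v
  · rw [if_pos huv] at hsplit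
    exact ⟨u, huS, huv, by omega⟩
  · rw [if_neg huv] at hsplit
    omega

/-- In a vertex-minimal subtournament `S` with minimum out-degree at least `k`,
every vertex of out-degree strictly greater than `k` has an in-neighbour of
out-degree exactly `k`. -/
theorem in_neighbour_of_outdeg_k {V : Type} [Fintype V] [DecidableEq V]
    (r : V → V → Prop) [DecidableRel r] (hT : IsTournament r)
    (k : ℕ) (hk : 0 < k) (hdeg : ∀ v : V, k ≤ outDeg r v)
    (S : Finset V) (hSne : S.Nonempty)
    (hSdeg : ∀ v ∈ S, k ≤ outDegOn r S v)
    (hSmin : ∀ S' : Finset V, S' ⊂ S → S'.Nonempty → ∃ v ∈ S', outDegOn r S' v < k) :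
    ∀ v ∈ S, k < outDegOn r S v → ∃ u ∈ S, r u v ∧ outDegOn r S u = k :=
  in_neighbour_of_outdeg_k_general r hT k S hSdeg hSmin
end

section
/- Any digraph containing a subdivision of the complete directed graph K⃗₃ contains a directed cycle of even length. -/
/-- A directed path from `a` to `b`. -/
def IsDipathFrom {V : Type} (r : V → V → Prop) (a b : V) (p : List V) : Prop :=
  p.Chain' r ∧ p.Nodup ∧ p.head? = some a ∧ p.getLast? = some b

/-- The interior (internal vertices) of a path given as a list. -/
def pathInterior {V : Type} (p : List V) : List V := p.tail.dropLast

/-- `r` contains a subdivision of the complete directed graph on `k` vertices. -/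
def ContainsCompleteSubdivision {V : Type} (r : V → V → Prop) (k : ℕ) : Prop :=
  ∃ (f : Fin k → V) (P : Fin k → Fin k → List V),
    Function.Injective f ∧
    (∀ i j : Fin k, i ≠ j →
      IsDipathFrom r (f i) (f j) (P i j) ∧ 2 ≤ (P i j).length ∧
      (∀ x ∈ pathInterior (P i j), ∀ l : Fin k, x ≠ f l)) ∧
    (∀ i j i' j' : Fin k, i ≠ j → i' ≠ j' → (i, j) ≠ (i', j') →
      ∀ x ∈ pathInterior (P i j), x ∉ pathInterior (P i' j'))

/-- `r` has a directed cycle of even length: a list of distinct vertices,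
consecutively joined by edges, of even length at least 2, whose last vertex is
joined back to its first vertex. -/
def HasEvenDicycle {V : Type} (r : V → V → Prop) : Prop :=
  ∃ c : List V, c.Chain' r ∧ c.Nodup ∧ 2 ≤ c.length ∧ c.length % 2 = 0 ∧
    ∃ a b : V, c.head? = some a ∧ c.getLast? = some b ∧ r b a

/-! The paths `P i j` and `P j i` of a subdivision of `K⃗₃` close up to a cycle (a digon), and
so do the paths around each of the two triangles `0 → 1 → 2 → 0` and `0 → 2 → 1 → 0`, since
distinct paths meet only at shared branch vertices. Together the two triangles use exactly the
paths of the three digons, so if all three digons are odd, the two triangles have odd total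
length and one of them is even.

A list `p` of vertices has `p.length - 1` edges: the digon on `p, q` is even iff
`p.length + q.length` is, and a triangle is even iff the sum of its three list lengths is odd. -/

namespace IsDipathFrom

variable {V : Type} {r : V → V → Prop} {a b c : V} {p q : List V}

lemma ne_nil (hp : IsDipathFrom r a b p) : p ≠ [] := by
  rintro rfl
  simp [IsDipathFrom] at hp

lemma dropLast_append_singleton (hp : IsDipathFrom r a b p) : p.dropLast ++ [b] = p :=
  List.dropLast_append_getLast? b hp.2.2.2

lemma dropLast_eq_cons_pathInterior (hp : IsDipathFrom r a b p) (h2 : 2 ≤ p.length) :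
    p.dropLast = a :: pathInterior p := by
  obtain ⟨-, -, hh, -⟩ := hp
  match p, h2 with
  | x :: y :: s, _ =>
    obtain rfl : x = a := by simpa using hh
    rfl

lemma exists_isDipathFrom_dropLast (hp : IsDipathFrom r a b p) (h2 : 2 ≤ p.length) :
    ∃ z, IsDipathFrom r a z p.dropLast ∧ r z b := by
  have hne : p.dropLast ≠ [] := by
    rw [← List.length_pos_iff, List.length_dropLast]
    omega
  have hpb := hp.dropLast_append_singleton
  obtain ⟨hc, hn, hh, -⟩ := hp
  have hc : (p.dropLast ++ [b]).IsChain r := by rwa [hpb]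
  rw [← hpb] at hn hh
  rw [List.isChain_append] at hc
  refine ⟨p.dropLast.getLast hne, ⟨hc.1, hn.sublist (List.sublist_append_left _ _), ?_, ?_⟩, ?_⟩
  · simpa [List.head?_append, List.head?_eq_some_head hne] using hh
  · exact List.getLast?_eq_some_getLast hne
  · exact hc.2.2 _ (List.getLast?_eq_some_getLast hne) b rfl

lemma append (hp : IsDipathFrom r a b p) (hq : IsDipathFrom r b c q)
    (hpq : p.dropLast.Disjoint q) : IsDipathFrom r a c (p.dropLast ++ q) := by
  have hpb := hp.dropLast_append_singleton
  have hqne := hq.ne_nil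
  obtain ⟨hpc, hpn, hph, -⟩ := hp
  obtain ⟨hqc, hqn, hqh, hql⟩ := hq
  have hpc : (p.dropLast ++ [b]).IsChain r := by rwa [hpb]
  rw [List.isChain_append] at hpc
  refine ⟨List.isChain_append.2 ⟨hpc.1, hqc, fun x hx y hy => ?_⟩,
    List.nodup_append.2 ⟨(List.dropLast_sublist p).nodup hpn, hqn,
      fun x hx y hy hxy => hpq hx (hxy ▸ hy)⟩, ?_, ?_⟩
  · obtain rfl : y = b := by simpa [hqh] using hy.symm
    exact hpc.2.2 x hx y rfl
  · rw [← hpb, List.head?_append] at hph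
    rw [List.head?_append]
    generalize p.dropLast.head? = o at hph ⊢
    cases o <;> simp_all
  · rw [List.getLast?_append_of_ne_nil _ hqne]
    exact hql

lemma hasEvenDicycle (hp : IsDipathFrom r a b p) (hba : r b a) (he : Even p.length) :
    HasEvenDicycle r := by
  have hpos := List.length_pos_iff.2 hp.ne_nil
  have he := Nat.even_iff.1 he
  exact ⟨p, hp.1, hp.2.1, by omega, he, a, b, hp.2.2.1, hp.2.2.2, hba⟩

lemma hasEvenDicycle_of_roundTrip (hp : IsDipathFrom r a b p) (hq : IsDipathFrom r b a q)
    (hq2 : 2 ≤ q.length) (hpq : p.dropLast.Disjoint q.dropLast)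
    (he : Even (p.length + q.length)) : HasEvenDicycle r := by
  obtain ⟨z, hq', hza⟩ := hq.exists_isDipathFrom_dropLast hq2
  refine (hp.append hq' hpq).hasEvenDicycle hza ?_
  have := List.length_pos_iff.2 hp.ne_nil
  simp only [List.length_append, List.length_dropLast, Nat.even_iff] at he ⊢
  omega

end IsDipathFrom

structure IsCompleteSubdivision {V : Type} (r : V → V → Prop) {k : ℕ} (f : Fin k → V)
    (P : Fin k → Fin k → List V) : Prop where
  injective : Function.Injective f
  isDipathFrom {i j : Fin k} : i ≠ j → IsDipathFrom r (f i) (f j) (P i j)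
  two_le_length {i j : Fin k} : i ≠ j → 2 ≤ (P i j).length
  ne_of_mem_pathInterior {i j : Fin k} : i ≠ j → ∀ x ∈ pathInterior (P i j), ∀ l, x ≠ f l
  disjoint_pathInterior {i j i' j' : Fin k} : i ≠ j → i' ≠ j' → (i, j) ≠ (i', j') →
    (pathInterior (P i j)).Disjoint (pathInterior (P i' j'))

lemma ContainsCompleteSubdivision.exists_isCompleteSubdivision {V : Type} {r : V → V → Prop}
    {k : ℕ} (h : ContainsCompleteSubdivision r k) :
    ∃ (f : Fin k → V) (P : Fin k → Fin k → List V), IsCompleteSubdivision r f P :=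
  let ⟨f, P, hinj, hP, hD⟩ := h
  ⟨f, P, hinj, fun hij => (hP _ _ hij).1, fun hij => (hP _ _ hij).2.1,
    fun hij => (hP _ _ hij).2.2, fun hij hij' hne _ hx hx' => hD _ _ _ _ hij hij' hne _ hx hx'⟩

namespace IsCompleteSubdivision

variable {V : Type} {r : V → V → Prop} {k : ℕ} {f : Fin k → V} {P : Fin k → Fin k → List V}
  {i j i' j' l : Fin k} {x : V}

lemma mem_dropLast (hS : IsCompleteSubdivision r f P) (hij : i ≠ j)
    (hx : x ∈ (P i j).dropLast) : x = f i ∨ x ∈ pathInterior (P i j) := by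
  rwa [(hS.isDipathFrom hij).dropLast_eq_cons_pathInterior (hS.two_le_length hij),
    List.mem_cons] at hx

lemma apply_notMem_dropLast (hS : IsCompleteSubdivision r f P) (hij : i ≠ j) (hli : l ≠ i) :
    f l ∉ (P i j).dropLast := fun hl =>
  (hS.mem_dropLast hij hl).elim (fun h => hli (hS.injective h))
    fun h => hS.ne_of_mem_pathInterior hij _ h l rfl

lemma disjoint_dropLast (hS : IsCompleteSubdivision r f P) (hij : i ≠ j) (hij' : i' ≠ j')
    (hii' : i ≠ i') : (P i j).dropLast.Disjoint (P i' j').dropLast := by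
  intro x hx hx'
  rcases hS.mem_dropLast hij hx with rfl | hxI
  · exact hS.apply_notMem_dropLast hij' hii' hx'
  rcases hS.mem_dropLast hij' hx' with rfl | hxI'
  · exact hS.ne_of_mem_pathInterior hij _ hxI i' rfl
  · exact hS.disjoint_pathInterior hij hij' (fun h => hii' (Prod.ext_iff.1 h).1) hxI hxI'

lemma disjoint_dropLast_of_consecutive (hS : IsCompleteSubdivision r f P) (hij : i ≠ j)
    (hjl : j ≠ l) (hli : l ≠ i) : (P i j).dropLast.Disjoint (P j l) := by
  intro x hx hx'
  rw [← (hS.isDipathFrom hjl).dropLast_append_singleton, List.mem_append,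
    List.mem_singleton] at hx'
  rcases hx' with hx' | rfl
  · exact hS.disjoint_dropLast hij hjl hij hx hx'
  · exact hS.apply_notMem_dropLast hij hli hx

lemma hasEvenDicycle_of_even_digon (hS : IsCompleteSubdivision r f P) (hij : i ≠ j)
    (he : Even ((P i j).length + (P j i).length)) : HasEvenDicycle r :=
  (hS.isDipathFrom hij).hasEvenDicycle_of_roundTrip (hS.isDipathFrom hij.symm)
    (hS.two_le_length hij.symm) (hS.disjoint_dropLast hij hij.symm hij) he

lemma hasEvenDicycle_of_odd_triangle (hS : IsCompleteSubdivision r f P) (hij : i ≠ j)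
    (hjl : j ≠ l) (hli : l ≠ i) (ho : Odd ((P i j).length + (P j l).length + (P l i).length)) :
    HasEvenDicycle r := by
  have hpath := (hS.isDipathFrom hij).append (hS.isDipathFrom hjl)
    (hS.disjoint_dropLast_of_consecutive hij hjl hli)
  refine hpath.hasEvenDicycle_of_roundTrip (hS.isDipathFrom hli) (hS.two_le_length hli) ?_ ?_
  · rw [List.dropLast_append_of_ne_nil (hS.isDipathFrom hjl).ne_nil]
    exact List.disjoint_append_left.2
      ⟨hS.disjoint_dropLast hij hli hli.symm, hS.disjoint_dropLast hjl hli hjl⟩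
  · have := hS.two_le_length hij
    simp only [List.length_append, List.length_dropLast, Nat.even_iff, Nat.odd_iff] at ho ⊢
    omega

end IsCompleteSubdivision

/-- Any digraph containing a subdivision of `K⃗₃` contains a directed cycle of
even length. -/
theorem even_cycle_of_K3_subdivision {V : Type} (r : V → V → Prop)
    (h : ContainsCompleteSubdivision r 3) : HasEvenDicycle r := by
  obtain ⟨f, P, hS⟩ := h.exists_isCompleteSubdivision
  have : Even ((P 0 1).length + (P 1 0).length) ∨ Even ((P 0 2).length + (P 2 0).length) ∨
      Even ((P 1 2).length + (P 2 1).length) ∨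
      Odd ((P 0 1).length + (P 1 2).length + (P 2 0).length) ∨
      Odd ((P 0 2).length + (P 2 1).length + (P 1 0).length) := by
    simp only [Nat.even_iff, Nat.odd_iff]
    omega
  rcases this with h | h | h | h | h
  · exact hS.hasEvenDicycle_of_even_digon (by decide) h
  · exact hS.hasEvenDicycle_of_even_digon (by decide) h
  · exact hS.hasEvenDicycle_of_even_digon (by decide) h
  · exact hS.hasEvenDicycle_of_odd_triangle (by decide) (by decide) (by decide) h
  · exact hS.hasEvenDicycle_of_odd_triangle (by decide) (by decide) (by decide) h
end

section
/- Let k ≥ 2 and let T be the tournament obtained as follows: V(T) = A ∪ B ∪ C with A, B, C pairwise disjoint, |C| = 2k − 2, |A|, |B| ≥ 2k, all edges directed from A to B, from B to C, and from C to A, and the edges inside each of A, B, C oriented arbitrarily. Then T is not k-linked. -/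
/-- `r` is `k`-linked. -/
def KLinked {V : Type} (r : V → V → Prop) (k : ℕ) : Prop :=
  ∀ x y : Fin k → V, Function.Injective x → Function.Injective y →
    (∀ i j, x i ≠ y j) →
    ∃ P : Fin k → List V,
      (∀ i, IsDipathFrom r (x i) (y i) (P i)) ∧
      (∀ i j, i ≠ j → ∀ v ∈ P i, v ∉ P j)

theorem IsTournament.not_rel_of_rel {V : Type} {r : V → V → Prop} (hT : IsTournament r)
    {x y : V} (h : r x y) : ¬ r y x := by
  rcases eq_or_ne x y with rfl | hne
  · exact absurd h (hT.1 x)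
  · exact (hT.2 x y hne).mp h

theorem List.IsChain.exists_rel_not_mem {V : Type} {r : V → V → Prop} {p : List V}
    (hp : p.IsChain r) {S : Set V} {a b : V} (ha : p.head? = some a) (haS : a ∈ S)
    (hb : p.getLast? = some b) (hbS : b ∉ S) : ∃ u ∈ S, ∃ v ∈ p, r u v ∧ v ∉ S := by
  by_contra! hclosed
  have hstep : p.IsChain fun u v => r u v ∧ v ∈ p :=
    hp.imp_of_mem_imp fun _ _ _ hv huv => ⟨huv, hv⟩
  have hstays : ∀ v ∈ p, v ∈ S := by
    refine hstep.induction (· ∈ S) p (fun u v ⟨huv, hv⟩ hu => hclosed u hu v hv huv) ?_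
    intro hne
    rw [List.head?_eq_some_head hne, Option.some.injEq] at ha
    exact ha ▸ haS
  exact hbS (hstays b (List.mem_of_mem_getLast? hb))

theorem IsDipathFrom.head_mem {V : Type} {r : V → V → Prop} {a b : V} {p : List V}
    (h : IsDipathFrom r a b p) : a ∈ p :=
  List.mem_of_mem_head? h.2.2.1

theorem IsDipathFrom.getLast_mem {V : Type} {r : V → V → Prop} {a b : V} {p : List V}
    (h : IsDipathFrom r a b p) : b ∈ p :=
  List.mem_of_mem_getLast? h.2.2.2

theorem not_kLinked_of_separator {V : Type} {r : V → V → Prop} {n : ℕ} (C : Finset V)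
    (hC : C.card = n + n) {a b : V} (ha : a ∉ C) (hb : b ∉ C) (hba : b ≠ a)
    (hsep : ∀ p, IsDipathFrom r b a p → ∃ c ∈ C, c ∈ p) : ¬ KLinked r (n + 1) := by
  intro hK
  let e : Fin (n + n) ≃ C := (C.equivFinOfCardEq hC).symm
  have he : Function.Injective fun m => (e m : V) := Subtype.val_injective.comp e.injective
  have hbe : ∀ m, b ≠ e m := fun m h => hb (h ▸ (e m).2)
  have hae : ∀ m, a ≠ e m := fun m h => ha (h ▸ (e m).2)
  -- Path `0` joins `b` to `a`; the other `n` paths have all `2n` vertices of `C` as endpoints.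
  let x : Fin (n + 1) → V := Fin.cons b fun i => e (Fin.castAdd n i)
  let y : Fin (n + 1) → V := Fin.cons a fun i => e (Fin.natAdd n i)
  have hx : Function.Injective x := Fin.cons_injective_of_injective
    (by rintro ⟨i, hi⟩; exact hbe _ hi.symm) (he.comp (Fin.castAdd_injective n n))
  have hy : Function.Injective y := Fin.cons_injective_of_injective
    (by rintro ⟨i, hi⟩; exact hae _ hi.symm) (he.comp (Fin.natAdd_injective n n))
  have hxy : ∀ i j, x i ≠ y j := by
    intro i j
    cases i using Fin.cases <;> cases j using Fin.cases
    · exact hba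
    · exact hbe _
    · exact (hae _).symm
    · refine fun h => (he h).not_lt ?_
      simp only [Fin.lt_def, Fin.val_castAdd, Fin.val_natAdd]; omega
  obtain ⟨P, hP, hdisj⟩ := hK x y hx hy hxy
  obtain ⟨c, hcC, hc⟩ := hsep (P 0) (hP 0)
  obtain ⟨m, rfl⟩ : ∃ m, (e m : V) = c := ⟨e.symm ⟨c, hcC⟩, by simp⟩
  induction m using Fin.addCases with
  | left i => exact hdisj 0 i.succ (Fin.succ_ne_zero i).symm _ hc (hP i.succ).head_mem
  | right j => exact hdisj 0 j.succ (Fin.succ_ne_zero j).symm _ hc (hP j.succ).getLast_mem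

theorem IsDipathFrom.exists_mem_of_forall_not_rel {V : Type} {r : V → V → Prop}
    {A B C : Set V} (hcover : A ∪ B ∪ C = Set.univ) (hAB : Disjoint A B)
    (hBA : ∀ b ∈ B, ∀ a ∈ A, ¬ r b a) {a b : V} {p : List V} (hp : IsDipathFrom r b a p)
    (hb : b ∈ B) (ha : a ∈ A) : ∃ c ∈ C, c ∈ p := by
  obtain ⟨u, hu, v, hv, huv, hvB⟩ :=
    List.IsChain.exists_rel_not_mem hp.1 hp.2.2.1 hb hp.2.2.2 (hAB.notMem_of_mem_left ha)
  have hvA : v ∉ A := fun hvA => hBA u hu v hvA huv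
  have hvABC : v ∈ A ∪ B ∪ C := hcover ▸ Set.mem_univ v
  exact ⟨v, by simpa [hvA, hvB] using hvABC, hv⟩

theorem triangle_blowup_not_klinked_general {V : Type} [Fintype V] [DecidableEq V]
    (r : V → V → Prop) (hT : IsTournament r)
    (k : ℕ) (hk : 2 ≤ k) (A B C : Finset V)
    (hAB : Disjoint A B) (hAC : Disjoint A C) (hBC : Disjoint B C)
    (hcover : A ∪ B ∪ C = Finset.univ)
    (hCcard : C.card = 2 * k - 2) (hAcard : 2 * k ≤ A.card) (hBcard : 2 * k ≤ B.card)
    (hABedges : ∀ a ∈ A, ∀ b ∈ B, r a b) :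
    ¬ KLinked r k := by
  obtain ⟨n, rfl⟩ : ∃ n, k = n + 1 := ⟨k - 1, by omega⟩
  obtain ⟨a, ha⟩ : A.Nonempty := Finset.card_pos.mp (by omega)
  obtain ⟨b, hb⟩ : B.Nonempty := Finset.card_pos.mp (by omega)
  have hcover_set : (↑A ∪ ↑B ∪ ↑C : Set V) = Set.univ := by
    rw [← Finset.coe_union, ← Finset.coe_union, hcover, Finset.coe_univ]
  have hba : b ≠ a := fun h => Finset.disjoint_left.mp hAB ha (h ▸ hb)
  refine not_kLinked_of_separator C (by omega) (hAC.notMem_of_mem_left_finset ha)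
    (hBC.notMem_of_mem_left_finset hb) hba fun p hp => ?_
  exact hp.exists_mem_of_forall_not_rel hcover_set (by exact_mod_cast hAB)
    (fun b hb a ha => hT.not_rel_of_rel (hABedges a ha b hb)) hb ha

/-- The blow-up of a directed triangle with parts `A → B → C → A`,
`|C| = 2k - 2` and `|A|, |B| ≥ 2k`, is not `k`-linked. -/
theorem triangle_blowup_not_klinked {V : Type} [Fintype V] [DecidableEq V]
    (r : V → V → Prop) [DecidableRel r] (hT : IsTournament r)
    (k : ℕ) (hk : 2 ≤ k) (A B C : Finset V)
    (hAB : Disjoint A B) (hAC : Disjoint A C) (hBC : Disjoint B C)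
    (hcover : A ∪ B ∪ C = Finset.univ)
    (hCcard : C.card = 2 * k - 2) (hAcard : 2 * k ≤ A.card) (hBcard : 2 * k ≤ B.card)
    (hABedges : ∀ a ∈ A, ∀ b ∈ B, r a b)
    (hBCedges : ∀ b ∈ B, ∀ c ∈ C, r b c)
    (hCAedges : ∀ c ∈ C, ∀ a ∈ A, r c a) :
    ¬ KLinked r k :=
  triangle_blowup_not_klinked_general r hT k hk A B C hAB hAC hBC hcover hCcard hAcard hBcard
    hABedges
end
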